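/- Every homogeneous polynomial $h$ in the ideal $I_n = \langle e_1,\ldots,e_n\rangle \subset \mathbb{Z}[X_1,\ldots,X_n]$ admits a decomposition $h = \sum_{w \in S_n} \langle h, \mathfrak{S}^w\rangle\, \mathfrak{S}_w$, where each coefficient $\langle h, \mathfrak{S}^w\rangle = \partial_{w_0}(h \cdot \mathfrak{S}^w)$ is a symmetric polynomial lying in $\Lambda_n \cap I_n$. -/

import Mathlib

open MvPolynomial Finset

noncomputable section

/-- The length (number of inversions) of a permutation of `ℕ`. -/
def permLength (w : Equiv.Perm ℕ) : ℕ :=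
  Nat.card {p : ℕ × ℕ // p.1 < p.2 ∧ w p.2 < w p.1}

/-- `w` belongs to `S_n` (0-indexed): it fixes every `i ≥ n`. -/
def memSn (n : ℕ) (w : Equiv.Perm ℕ) : Prop :=
  ∀ i, n ≤ i → w i = i

/-- `w` belongs to `S_∞`: it fixes all but finitely many points. -/
def finSupp (w : Equiv.Perm ℕ) : Prop :=
  ∃ n, memSn n w

/-- The longest element of `S_n`: `i ↦ n - 1 - i` on `{0, …, n-1}`, identity elsewhere. -/
def w0 (n : ℕ) : Equiv.Perm ℕ :=
  Function.Involutive.toPerm (fun i => if i < n then n - 1 - i else i)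
    (by intro i; dsimp only; split_ifs <;> omega)

/-- The staircase monomial `X_0^{n-1} X_1^{n-2} ⋯ X_{n-2}`. -/
def staircase (n : ℕ) : MvPolynomial ℕ ℤ :=
  ∏ i ∈ Finset.range n, X i ^ (n - 1 - i)

/-- Divided difference operators and Schubert polynomials, packaged with their defining
properties: `D i` is the divided difference `∂_i f = (f - s_i f)/(X_i - X_{i+1})`,
`Dw` is `∂_w` (defined through reduced words), and the Schubert polynomial is
`𝔖_w = ∂_{w⁻¹ w₀} (X_0^{n-1} X_1^{n-2} ⋯)` for `w ∈ S_n` (compatibly with the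
inclusions `S_n ⊆ S_{n+1}`). -/
structure SchubertData where
  D : ℕ → MvPolynomial ℕ ℤ → MvPolynomial ℕ ℤ
  hD : ∀ i f, (X i - X (i + 1)) * D i f = f - rename (⇑(Equiv.swap i (i + 1))) f
  Dw : Equiv.Perm ℕ → MvPolynomial ℕ ℤ → MvPolynomial ℕ ℤ
  Dw_one : Dw 1 = id
  Dw_step : ∀ w i, permLength (w * Equiv.swap i (i + 1)) = permLength w + 1 →
    Dw (w * Equiv.swap i (i + 1)) = Dw w ∘ D i
  S : Equiv.Perm ℕ → MvPolynomial ℕ ℤ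
  hS : ∀ n w, memSn n w → S w = Dw (w⁻¹ * w0 n) (staircase n)

/-- The `k`-th elementary symmetric polynomial in the variables `X_0, …, X_{n-1}`. -/
def esymmN (n k : ℕ) : MvPolynomial ℕ ℤ :=
  ∑ s ∈ Finset.powersetCard k (Finset.range n), ∏ i ∈ s, X i

/-- The ideal `I_n = ⟨e_1, …, e_n⟩` of `ℤ[X_0, X_1, …]`. -/
def In (n : ℕ) : Ideal (MvPolynomial ℕ ℤ) :=
  Ideal.span {p | ∃ k, 1 ≤ k ∧ k ≤ n ∧ p = esymmN n k}

/-- The embedding of `S_n = Perm (Fin n)` into `Perm ℕ`. -/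
def embedPerm (n : ℕ) (u : Equiv.Perm (Fin n)) : Equiv.Perm ℕ :=
  u.extendDomain Fin.equivSubtype


/-!
The coefficients `⟨h, 𝔖^w⟩` are values of `∂_{w₀}`, which factors as `∂_i ∘ ∂_{s_i w₀}` and so
has symmetric values; they lie in `I_n` because every `∂_i` satisfies a Leibniz rule and kills the
symmetric generators `e_k`.

For the expansion, `∂_i` commutes with `f ↦ ∑_w ⟨f, 𝔖^w⟩ 𝔖_w`: this follows from
`∂_i 𝔖_w = 𝔖_{w s_i}` or `0`, `∂_i 𝔖^w = 𝔖^{w s_i}` or `0`, and the self-adjointness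
`⟨∂_i f, g⟩ = ⟨f, ∂_i g⟩`. By induction on the degree, the difference `E` between `f` and its
expansion is killed by every `∂_i`, hence is symmetric, so `E = ⟨E, 𝔖^{id}⟩`. Finally
`⟨𝔖_w, 𝔖^{id}⟩ = δ_{w, id}`: the exponents of `𝔖_w` are bounded by the staircase, so for
`w ≠ id` every monomial of `x^δ · w₀ 𝔖_w` has two equal exponents among `X_0, …, X_{n-1}` and is
killed by `∂_{w₀}`.
-/

open Equiv

/-! ### Permutations of `ℕ` fixing all `i ≥ n` -/

section Permutations

variable {n : ℕ} {w v : Perm ℕ}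

theorem memSn.mono {m : ℕ} (hw : memSn n w) (h : n ≤ m) : memSn m w :=
  fun i hi => hw i (h.trans hi)

theorem memSn_one (n : ℕ) : memSn n 1 := fun _ _ => rfl

theorem memSn.mul (hw : memSn n w) (hv : memSn n v) :
    memSn n (w * v) :=
  fun i hi => by rw [Perm.mul_apply, hv i hi, hw i hi]

theorem memSn.inv (hw : memSn n w) : memSn n w⁻¹ :=
  fun i hi => by rw [Perm.inv_eq_iff_eq, hw i hi]

theorem memSn_swap {a b : ℕ} (ha : a < n) (hb : b < n) : memSn n (swap a b) :=
  fun _ _ => swap_apply_of_ne_of_ne (by omega) (by omega)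

theorem memSn_swap_succ {i : ℕ} (hin : i + 1 < n) : memSn n (swap i (i + 1)) :=
  memSn_swap (by omega) hin

theorem memSn.apply_lt (hw : memSn n w) {a : ℕ} (ha : a < n) : w a < n := by
  by_contra! h
  have := w.injective (hw _ h)
  omega

theorem memSn.finSupp (hw : memSn n w) : finSupp w := ⟨n, hw⟩

theorem finSupp.mul (hw : finSupp w) (hv : finSupp v) : finSupp (w * v) := by
  obtain ⟨n, hn⟩ := hw
  obtain ⟨m, hm⟩ := hv
  exact ((hn.mono (le_max_left n m)).mul (hm.mono (le_max_right n m))).finSupp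

theorem finSupp_swap (i : ℕ) : finSupp (swap i (i + 1)) :=
  (memSn_swap_succ (n := i + 2) (by omega)).finSupp

theorem memSn.map_range {σ : Perm ℕ} (hσ : memSn n σ) :
    (range n).map σ.toEmbedding = range n :=
  Finset.eq_of_subset_of_card_le (fun x hx => by
    obtain ⟨a, ha, rfl⟩ := Finset.mem_map.1 hx
    exact mem_range.2 (hσ.apply_lt (mem_range.1 ha))) (by simp)

theorem eq_one_of_forall_le_succ (hw : memSn n w)
    (h : ∀ i, i + 1 < n → w i ≤ w (i + 1)) : w = 1 := by
  have hmono : StrictMono w := by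
    refine (monotone_nat_of_le_succ fun i => ?_).strictMono_of_injective w.injective
    rcases lt_or_ge (i + 1) n with hi | hi
    · exact h i hi
    · rw [hw (i + 1) hi]
      rcases lt_or_ge i n with hi' | hi'
      · exact (hw.apply_lt hi').le.trans hi
      · rw [hw i hi']
        omega
  ext x
  exact congrArg (· x) (congrArg DFunLike.coe
    (Subsingleton.elim (hmono.orderIsoOfSurjective w w.surjective) (OrderIso.refl ℕ)))

theorem exists_descent (hw : memSn n w) (hne : w ≠ 1) :
    ∃ i, i + 1 < n ∧ w (i + 1) < w i := by
  by_contra! h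
  exact hne (eq_one_of_forall_le_succ hw h)

def inversions (w : Perm ℕ) : Set (ℕ × ℕ) := {p | p.1 < p.2 ∧ w p.2 < w p.1}

def increasingPairs (n : ℕ) : Set (ℕ × ℕ) := {p | p.1 < p.2 ∧ p.2 < n}

theorem permLength_eq_ncard (w : Perm ℕ) : permLength w = (inversions w).ncard := rfl

theorem finite_increasingPairs (n : ℕ) : (increasingPairs n).Finite :=
  ((Set.finite_Iio n).prod (Set.finite_Iio n)).subset fun _ hp => ⟨hp.1.trans hp.2, hp.2⟩

theorem inversions_subset (hw : memSn n w) : inversions w ⊆ increasingPairs n := by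
  rintro ⟨a, b⟩ ⟨hab, hinv⟩
  have ha : a < n → w a < n := hw.apply_lt
  have ha' : n ≤ a → w a = a := hw a
  have hb' : n ≤ b → w b = b := hw b
  dsimp only at hab hinv
  show a < b ∧ b < n
  omega

theorem finite_inversions (hw : finSupp w) : (inversions w).Finite :=
  (finite_increasingPairs _).subset (inversions_subset hw.choose_spec)

theorem inversions_one : inversions 1 = ∅ :=
  Set.eq_empty_of_forall_notMem fun _ hp => lt_asymm hp.1 hp.2

theorem permLength_one : permLength 1 = 0 := by
  rw [permLength_eq_ncard, inversions_one, Set.ncard_empty]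

theorem inversions_mul_swap {i : ℕ} (h : w i < w (i + 1)) :
    inversions (w * swap i (i + 1)) =
      insert (i, i + 1) (Prod.map (swap i (i + 1)) (swap i (i + 1)) ⁻¹' inversions w) := by
  ext ⟨a, b⟩
  simp only [inversions, Set.mem_insert_iff, Set.mem_preimage, Prod.map, Set.mem_ofPred_eq,
    Prod.mk.injEq, Perm.mul_apply]
  rw [swap_apply_def, swap_apply_def]
  split_ifs <;> subst_vars <;> omega

theorem permLength_mul_swap_of_lt (hw : finSupp w) {i : ℕ} (h : w i < w (i + 1)) :
    permLength (w * swap i (i + 1)) = permLength w + 1 := by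
  set s := swap i (i + 1)
  have hinj : (Prod.map s s).Injective := Prod.map_injective.2 ⟨s.injective, s.injective⟩
  have hsurj : (Prod.map s s).Surjective := Prod.map_surjective.2 ⟨s.surjective, s.surjective⟩
  have hnotMem : (i, i + 1) ∉ Prod.map s s ⁻¹' inversions w := by
    simp [s, inversions]
  rw [permLength_eq_ncard, inversions_mul_swap h,
    Set.ncard_insert_of_notMem hnotMem ((finite_inversions hw).preimage hinj.injOn),
    Set.ncard_preimage_of_injective_subset_range hinj (by simp [hsurj.range_eq]),
    permLength_eq_ncard]

theorem permLength_mul_swap_of_gt (hw : finSupp w) {i : ℕ} (h : w (i + 1) < w i) :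
    permLength w = permLength (w * swap i (i + 1)) + 1 := by
  have key := permLength_mul_swap_of_lt (hw.mul (finSupp_swap i)) (i := i) (by simpa using h)
  rwa [mul_swap_mul_self] at key

theorem permLength_swap (i : ℕ) : permLength (swap i (i + 1)) = 1 := by
  simpa [permLength_one] using
    permLength_mul_swap_of_lt (memSn_one 0).finSupp (w := 1) (i := i) (by simp)

theorem permLength_mul_le {u : Perm ℕ} (hu : finSupp u) (hv : finSupp v) :
    permLength (u * v) ≤ permLength u + permLength v := by
  have hinj : (Prod.map v v).Injective := Prod.map_injective.2 ⟨v.injective, v.injective⟩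
  have hsurj : (Prod.map v v).Surjective := Prod.map_surjective.2 ⟨v.surjective, v.surjective⟩
  have hsub : inversions (u * v) ⊆ Prod.map v v ⁻¹' inversions u ∪ inversions v := by
    rintro ⟨a, b⟩ ⟨hab, hinv⟩
    have hne : v a ≠ v b := fun h => hab.ne (v.injective h)
    simp only [inversions, Perm.mul_apply, Set.mem_union, Set.mem_preimage, Prod.map,
      Set.mem_ofPred_eq] at hinv ⊢
    omega
  rw [permLength_eq_ncard, permLength_eq_ncard, permLength_eq_ncard,
    ← Set.ncard_preimage_of_injective_subset_range (s := inversions u) hinj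
      (by simp [hsurj.range_eq])]
  exact (Set.ncard_le_ncard hsub
    (((finite_inversions hu).preimage hinj.injOn).union (finite_inversions hv))).trans
    (Set.ncard_union_le _ _)

theorem permLength_inv (w : Perm ℕ) : permLength w⁻¹ = permLength w :=
  Nat.card_congr <| ((Equiv.prodComm ℕ ℕ).trans (w⁻¹.prodCongr w⁻¹)).subtypeEquiv fun p => by
    simp [and_comm]

theorem eq_one_of_permLength_eq_zero (hw : memSn n w) (h : permLength w = 0) : w = 1 := by
  by_contra hne
  obtain ⟨i, -, hdes⟩ := exists_descent hw hne
  have := permLength_mul_swap_of_gt hw.finSupp hdes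
  omega

theorem memSn.induction {P : Perm ℕ → Prop} (one : P 1)
    (step : ∀ w i, memSn n w → i + 1 < n → w i < w (i + 1) → P w → P (w * swap i (i + 1)))
    (hw : memSn n w) : P w := by
  induction hk : permLength w using Nat.strong_induction_on generalizing w with
  | _ k ih =>
    rcases eq_or_ne w 1 with rfl | hne
    · exact one
    obtain ⟨i, hin, hdes⟩ := exists_descent hw hne
    have hlen := permLength_mul_swap_of_gt hw.finSupp hdes
    have hw' := hw.mul (memSn_swap_succ hin)
    have key := step _ i hw' hin (by simpa using hdes) (ih _ (by omega) hw' rfl)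
    rwa [mul_swap_mul_self] at key

theorem w0_apply (n x : ℕ) : w0 n x = if x < n then n - 1 - x else x := rfl

theorem w0_apply_of_lt {x : ℕ} (h : x < n) : w0 n x = n - 1 - x := if_pos h

theorem w0_zero : w0 0 = 1 := by
  ext x
  simp [w0_apply]

theorem memSn_w0 (n : ℕ) : memSn n (w0 n) := fun _ h => if_neg (by omega)

theorem w0_mul_self (n : ℕ) : w0 n * w0 n = 1 := by
  ext x
  simp only [Perm.mul_apply, Perm.one_apply, w0_apply]
  split_ifs <;> omega

theorem w0_inv (n : ℕ) : (w0 n)⁻¹ = w0 n := inv_eq_of_mul_eq_one_right (w0_mul_self n)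

theorem w0_apply_succ_lt {i : ℕ} (hin : i + 1 < n) : w0 n (i + 1) < w0 n i := by
  rw [w0_apply_of_lt hin, w0_apply_of_lt (by omega)]
  omega

theorem swap_mul_w0 {i : ℕ} (h : i + 1 < n) :
    swap i (i + 1) * w0 n = w0 n * swap (n - 2 - i) (n - 2 - i + 1) := by
  ext x
  simp only [Perm.mul_apply, swap_apply_def, w0_apply]
  split_ifs <;> omega

theorem inversions_w0_mul (hw : memSn n w) :
    inversions (w0 n * w) = increasingPairs n \ inversions w := by
  ext ⟨a, b⟩
  have hinj : a ≠ b → w a ≠ w b := fun h h' => h (w.injective h')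
  have ha : a < n → w a < n := hw.apply_lt
  have hb : b < n → w b < n := hw.apply_lt
  have ha' : n ≤ a → w a = a := hw a
  have hb' : n ≤ b → w b = b := hw b
  simp only [inversions, increasingPairs, Perm.mul_apply, Set.mem_sdiff, Set.mem_ofPred_eq,
    w0_apply]
  split_ifs <;> omega

theorem inversions_w0 (n : ℕ) : inversions (w0 n) = increasingPairs n := by
  simpa [inversions_one] using inversions_w0_mul (memSn_one n)

theorem permLength_w0_mul (hw : memSn n w) :
    permLength (w0 n * w) + permLength w = permLength (w0 n) := by
  rw [permLength_eq_ncard, permLength_eq_ncard, permLength_eq_ncard, inversions_w0_mul hw,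
    inversions_w0, Set.ncard_sdiff (inversions_subset hw) (finite_inversions hw.finSupp),
    Nat.sub_add_cancel (Set.ncard_le_ncard (inversions_subset hw) (finite_increasingPairs n))]

theorem permLength_inv_mul_w0 (hw : memSn n w) :
    permLength (w⁻¹ * w0 n) + permLength w = permLength (w0 n) := by
  rw [← permLength_inv (w⁻¹ * w0 n), mul_inv_rev, inv_inv, w0_inv]
  exact permLength_w0_mul hw

theorem permLength_swap_mul_w0 {i : ℕ} (hin : i + 1 < n) :
    permLength (swap i (i + 1) * w0 n) + 1 = permLength (w0 n) := by
  rw [← permLength_inv, mul_inv_rev, w0_inv, swap_inv,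
    permLength_mul_swap_of_gt (memSn_w0 n).finSupp (w0_apply_succ_lt hin)]

theorem permLength_w0 (n : ℕ) : permLength (w0 n) = ∑ i ∈ range n, (n - 1 - i) := by
  have hpairs : increasingPairs n = ↑((range n ×ˢ range n).filter fun p => p.1 < p.2) := by
    ext ⟨a, b⟩
    simp only [increasingPairs, Set.mem_ofPred_eq, coe_filter, mem_product, mem_range]
    omega
  rw [permLength_eq_ncard, inversions_w0, hpairs, Set.ncard_coe_finset, card_filter, sum_product]
  refine sum_congr rfl fun a _ => ?_
  rw [← card_filter, show n - 1 - a = n - a - 1 by omega, ← Nat.card_Ioo]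
  congr 1
  ext b
  simp only [mem_filter, mem_range, mem_Ioo]
  omega

def cycleRange : ℕ → Perm ℕ
  | 0 => 1
  | k + 1 => cycleRange k * swap k (k + 1)

theorem cycleRange_apply (k x : ℕ) :
    cycleRange k x = if x < k then x + 1 else if x = k then 0 else x := by
  induction k generalizing x with
  | zero => simp [cycleRange]
  | succ k ih =>
    rw [cycleRange, Perm.mul_apply, swap_apply_def]
    split_ifs <;> simp only [ih] <;> split_ifs <;> omega

theorem memSn_cycleRange (k : ℕ) : memSn (k + 1) (cycleRange k) := fun x hx => by
  rw [cycleRange_apply]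
  split_ifs <;> omega

theorem cycleRange_mul_w0 (n : ℕ) : cycleRange n * w0 n = w0 (n + 1) := by
  ext x
  simp only [Perm.mul_apply, cycleRange_apply, w0_apply]
  split_ifs <;> omega

theorem swap_mul_swap_eq_swap_mul_swap {a b : ℕ} (hab : a < b) :
    swap a (a + 1) * swap (a + 1) b = swap (a + 1) b * swap a b := by
  ext x
  simp only [Perm.mul_apply, swap_apply_def]
  split_ifs <;> omega

theorem memSn_embedPerm (u : Perm (Fin n)) : memSn n (embedPerm n u) :=
  fun _ hi => Perm.extendDomain_apply_not_subtype u Fin.equivSubtype (by simpa using hi)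

theorem embedPerm_one (n : ℕ) : embedPerm n 1 = 1 := Perm.extendDomain_one _

theorem embedPerm_mul (u v : Perm (Fin n)) :
    embedPerm n (u * v) = embedPerm n u * embedPerm n v :=
  (Perm.extendDomain_mul _ u v).symm

theorem embedPerm_eq_one_iff {u : Perm (Fin n)} : embedPerm n u = 1 ↔ u = 1 :=
  Perm.extendDomain_eq_one_iff

theorem embedPerm_swap (a b : Fin n) : embedPerm n (swap a b) = swap (a : ℕ) b := by
  ext x
  by_cases hx : x < n
  · rw [embedPerm, Perm.extendDomain_apply_subtype (swap a b) Fin.equivSubtype hx]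
    simp only [Fin.equivSubtype_symm_apply, swap_apply_def, Fin.ext_iff, Fin.equivSubtype_apply]
    split_ifs <;> simp_all
  · rw [embedPerm, Perm.extendDomain_apply_not_subtype (swap a b) Fin.equivSubtype hx,
      swap_apply_of_ne_of_ne (by omega) (by omega)]

theorem exists_lt_add_eq_add {f : ℕ → ℕ} (hf : ∀ k < n, k + f k < n) {k₀ : ℕ}
    (hk₀ : k₀ < n) (hfk₀ : f k₀ ≠ 0) : ∃ a b, a < b ∧ b < n ∧ a + f a = b + f b := by
  by_contra! h
  -- otherwise `k ↦ k + f k` permutes `range n`, which forces `∑ f = 0`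
  have hinj : Set.InjOn (fun k => k + f k) (range n) := by
    intro a ha b hb hab
    simp only [coe_range, Set.mem_Iio] at ha hb
    rcases lt_trichotomy a b with hlt | rfl | hgt
    · exact absurd hab (h a b hlt hb)
    · rfl
    · exact absurd hab.symm (h b a hgt ha)
  have himage : (range n).image (fun k => k + f k) = range n :=
    eq_of_subset_of_card_le (fun x hx => by
      obtain ⟨k, hk, rfl⟩ := mem_image.1 hx
      exact mem_range.2 (hf k (mem_range.1 hk))) (card_image_of_injOn hinj).ge
  have hsum := sum_image (f := fun x => x) hinj
  rw [himage, sum_add_distrib] at hsum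
  exact hfk₀ (sum_eq_zero_iff.1 (by omega) k₀ (mem_range.2 hk₀))

end Permutations

/-! ### Polynomials in `X_0, X_1, …` -/

theorem MvPolynomial.IsHomogeneous.of_mul_left {σ R : Type*} [CommRing R] [IsDomain R]
    {p q : MvPolynomial σ R} {m n : ℕ} (hp : p.IsHomogeneous m) (hp0 : p ≠ 0)
    (hpq : (p * q).IsHomogeneous (m + n)) : q.IsHomogeneous n := by
  let _ : GradedAlgebra (homogeneousSubmodule σ R) := MvPolynomial.gradedAlgebra
  have hcomp (k : ℕ) : homogeneousComponent (m + k) (p * q) = p * homogeneousComponent k q := by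
    rw [← decomposition.decompose'_apply, ← decomposition.decompose'_apply,
      DirectSum.Decomposition.decompose'_eq]
    exact DirectSum.coe_decompose_mul_add_of_left_mem (homogeneousSubmodule σ R) (b := q) (j := k)
      ((mem_homogeneousSubmodule m p).2 hp)
  have hvanish (k : ℕ) (hk : k ≠ n) : homogeneousComponent k q = 0 := by
    refine (mul_eq_zero.1 ((hcomp k).symm.trans ?_)).resolve_left hp0
    rw [homogeneousComponent_of_mem ((mem_homogeneousSubmodule _ _).2 hpq), if_neg (by omega)]
  have hq : homogeneousComponent n q = q := by
    conv_rhs => rw [← sum_homogeneousComponent q]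
    refine (sum_eq_single n (fun k _ hk => hvanish k hk) fun hn => ?_).symm
    exact homogeneousComponent_eq_zero _ _ (by simpa [Nat.lt_succ_iff] using hn)
  exact hq ▸ homogeneousComponent_isHomogeneous n q

theorem MvPolynomial.IsHomogeneous.aeval_neg_X {σ R : Type*} [CommRing R]
    {f : MvPolynomial σ R} {d : ℕ} (hf : f.IsHomogeneous d) :
    MvPolynomial.aeval (fun i => -X i) f = (-1 : R) ^ d • f := by
  conv_lhs => rw [f.as_sum]
  conv_rhs => rw [f.as_sum]
  rw [map_sum, smul_sum]
  refine sum_congr rfl fun α hα => ?_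
  rw [aeval_monomial, monomial_eq, ← hf (mem_support_iff.1 hα)]
  have hprod : (α.prod fun i k => (-X i : MvPolynomial σ R) ^ k) =
      (-1) ^ (α.sum fun _ k => k) * α.prod fun i k => X i ^ k := by
    rw [Finsupp.prod, Finsupp.prod, Finsupp.sum, ← prod_pow_eq_pow_sum, ← prod_mul_distrib]
    exact prod_congr rfl fun i _ => neg_pow _ _
  rw [hprod, Finsupp.weight_apply]
  simp only [algebraMap_eq, Finsupp.sum, Pi.one_apply, smul_eq_mul, mul_one, smul_eq_C_mul, C_pow,
    C_neg, C_1]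
  ring

theorem X_sub_X_ne_zero (i : ℕ) : (X i - X (i + 1) : MvPolynomial ℕ ℤ) ≠ 0 :=
  sub_ne_zero.2 fun h => by simpa using X_injective h

theorem degreeOf_X_sub_X_left (i : ℕ) :
    degreeOf i (X i - X (i + 1) : MvPolynomial ℕ ℤ) = 1 := by
  rw [sub_eq_add_neg, degreeOf_add_eq_of_degreeOf_lt] <;>
    simp [degreeOf_neg, degreeOf_X_of_ne (show i ≠ i + 1 by omega)]

theorem degreeOf_X_sub_X_right (i : ℕ) :
    degreeOf (i + 1) (X i - X (i + 1) : MvPolynomial ℕ ℤ) = 1 := by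
  rw [sub_eq_neg_add, degreeOf_add_eq_of_degreeOf_lt] <;>
    simp [degreeOf_neg, degreeOf_X_of_ne (show i + 1 ≠ i by omega)]

theorem rename_perm_mul (σ τ : Perm ℕ) (f : MvPolynomial ℕ ℤ) :
    rename ⇑(σ * τ) f = rename σ (rename τ f) :=
  (rename_rename τ σ f).symm

theorem rename_swap_rename_swap (a b : ℕ) (f : MvPolynomial ℕ ℤ) :
    rename (swap a b) (rename (swap a b) f) = f := by
  rw [← rename_perm_mul, swap_mul_self, Perm.coe_one, rename_id_apply]

theorem rename_w0_rename_w0 (n : ℕ) (f : MvPolynomial ℕ ℤ) :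
    rename (w0 n) (rename (w0 n) f) = f := by
  rw [← rename_perm_mul, w0_mul_self, Perm.coe_one, rename_id_apply]

theorem rename_swap_monomial {a b : ℕ} {γ : ℕ →₀ ℕ} (h : γ a = γ b) (c : ℤ) :
    rename (swap a b) (monomial γ c : MvPolynomial ℕ ℤ) = monomial γ c := by
  have hγ : γ.mapDomain (swap a b) = γ := by
    ext j
    rw [Finsupp.mapDomain_equiv_apply, symm_swap, swap_apply_def]
    split_ifs with h1 h2
    · rw [h1, h]
    · rw [h2, h]
    · rfl
  rw [rename_monomial, hγ]

/-- Symmetry in `X_0, …, X_{n-1}`, tested on the generators `s_i` of `S_n`. -/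
def SwapInvariant (n : ℕ) (f : MvPolynomial ℕ ℤ) : Prop :=
  ∀ i, i + 1 < n → rename (swap i (i + 1)) f = f

theorem SwapInvariant.rename_eq {n : ℕ} {f : MvPolynomial ℕ ℤ} (hf : SwapInvariant n f)
    {σ : Perm ℕ} (hσ : memSn n σ) : rename σ f = f :=
  hσ.induction (P := fun σ => rename σ f = f) (by simp) fun w i _ hin _ h => by
    rw [rename_perm_mul, hf i hin, h]

theorem rename_prod_X {n : ℕ} {σ : Perm ℕ} (hσ : memSn n σ) :
    rename σ (∏ i ∈ range n, X i : MvPolynomial ℕ ℤ) = ∏ i ∈ range n, X i := by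
  rw [map_prod]
  simp only [rename_X]
  conv_rhs => rw [← hσ.map_range, prod_map]
  rfl

theorem swapInvariant_prod_X (n : ℕ) : SwapInvariant n (∏ i ∈ range n, X i) :=
  fun _ hin => rename_prod_X (memSn_swap_succ hin)

theorem rename_esymmN {n : ℕ} (k : ℕ) {σ : Perm ℕ} (hσ : memSn n σ) :
    rename σ (esymmN n k) = esymmN n k := by
  rw [esymmN, map_sum]
  calc ∑ s ∈ powersetCard k (range n), rename σ (∏ i ∈ s, X i)
      = ∑ s ∈ powersetCard k (range n), ∏ i ∈ s.map σ.toEmbedding, (X i : MvPolynomial ℕ ℤ) := by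
        simp [prod_map]
    _ = ∑ t ∈ powersetCard k ((range n).map σ.toEmbedding), ∏ i ∈ t, X i := by
        rw [powersetCard_map, sum_map]
        rfl
    _ = _ := by rw [hσ.map_range]

/-- Polynomials whose monomials divide the staircase monomial `staircase n`. -/
def belowStaircase (n : ℕ) : Set (MvPolynomial ℕ ℤ) := {f | ∀ j, degreeOf j f ≤ n - 1 - j}

def staircaseExponent (n : ℕ) : ℕ →₀ ℕ := ∑ i ∈ range n, Finsupp.single i (n - 1 - i)

theorem staircaseExponent_apply (n j : ℕ) : staircaseExponent n j = n - 1 - j := by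
  rw [staircaseExponent, Finsupp.finsetSum_apply,
    sum_eq_single j (fun i _ hij => Finsupp.single_eq_of_ne hij.symm) fun hj => by
      simp only [mem_range] at hj
      simp only [Finsupp.single_eq_same]
      omega,
    Finsupp.single_eq_same]

theorem staircase_eq_monomial (n : ℕ) : staircase n = monomial (staircaseExponent n) 1 := by
  rw [staircase, staircaseExponent, monomial_sum_one]
  exact prod_congr rfl fun i _ => X_pow_eq_monomial

theorem staircase_succ (n : ℕ) : staircase (n + 1) = (∏ i ∈ range n, X i) * staircase n := by
  rw [staircase, staircase, prod_range_succ, Nat.add_sub_cancel, Nat.sub_self, pow_zero, mul_one,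
    ← prod_mul_distrib]
  refine prod_congr rfl fun i hi => ?_
  rw [← pow_succ', show n - 1 - i + 1 = n - i by have := mem_range.1 hi; omega]

theorem staircase_isHomogeneous (n : ℕ) : (staircase n).IsHomogeneous (permLength (w0 n)) :=
  permLength_w0 n ▸ IsHomogeneous.prod _ _ _ fun i _ => isHomogeneous_X_pow i _

theorem staircase_mem_belowStaircase (n : ℕ) : staircase n ∈ belowStaircase n := fun j => by
  rw [staircase_eq_monomial, degreeOf_monomial_eq _ _ one_ne_zero, staircaseExponent_apply]

/-! ### Divided differences -/

namespace SchubertData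

variable (SD : SchubertData)

theorem D_eq_of_mul {i : ℕ} {f g : MvPolynomial ℕ ℤ}
    (h : (X i - X (i + 1)) * g = f - rename (swap i (i + 1)) f) : SD.D i f = g :=
  mul_left_cancel₀ (X_sub_X_ne_zero i) ((SD.hD i f).trans h.symm)

theorem D_add (i : ℕ) (f g : MvPolynomial ℕ ℤ) : SD.D i (f + g) = SD.D i f + SD.D i g :=
  SD.D_eq_of_mul <| by rw [map_add]; linear_combination SD.hD i f + SD.hD i g

def dHom (i : ℕ) : MvPolynomial ℕ ℤ →+ MvPolynomial ℕ ℤ := AddMonoidHom.mk' (SD.D i) (SD.D_add i)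

theorem D_zero (i : ℕ) : SD.D i 0 = 0 := (SD.dHom i).map_zero

theorem D_sub (i : ℕ) (f g : MvPolynomial ℕ ℤ) : SD.D i (f - g) = SD.D i f - SD.D i g :=
  map_sub (SD.dHom i) f g

theorem D_sum (i : ℕ) {ι : Type*} (s : Finset ι) (F : ι → MvPolynomial ℕ ℤ) :
    SD.D i (∑ x ∈ s, F x) = ∑ x ∈ s, SD.D i (F x) :=
  map_sum (SD.dHom i) F s

theorem D_zsmul (i : ℕ) (z : ℤ) (f : MvPolynomial ℕ ℤ) : SD.D i (z • f) = z • SD.D i f :=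
  map_zsmul (SD.dHom i) z f

theorem D_mul (i : ℕ) (f g : MvPolynomial ℕ ℤ) :
    SD.D i (f * g) = SD.D i f * g + rename (swap i (i + 1)) f * SD.D i g :=
  SD.D_eq_of_mul <| by
    rw [map_mul]
    linear_combination g * SD.hD i f + rename (swap i (i + 1)) f * SD.hD i g

theorem D_mul_left_of_invariant {i : ℕ} {c : MvPolynomial ℕ ℤ}
    (hc : rename (swap i (i + 1)) c = c) (f : MvPolynomial ℕ ℤ) :
    SD.D i (c * f) = c * SD.D i f :=
  SD.D_eq_of_mul <| by rw [map_mul, hc]; linear_combination c * SD.hD i f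

theorem D_eq_zero_of_invariant {i : ℕ} {f : MvPolynomial ℕ ℤ}
    (hf : rename (swap i (i + 1)) f = f) : SD.D i f = 0 :=
  SD.D_eq_of_mul <| by rw [hf, mul_zero, sub_self]

theorem invariant_of_D_eq_zero {i : ℕ} {f : MvPolynomial ℕ ℤ} (hf : SD.D i f = 0) :
    rename (swap i (i + 1)) f = f := by
  have h := SD.hD i f
  rw [hf, mul_zero] at h
  exact (sub_eq_zero.1 h.symm).symm

theorem D_X_self (i : ℕ) : SD.D i (X i) = 1 :=
  SD.D_eq_of_mul <| by rw [rename_X, swap_apply_left, mul_one]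

theorem D_rename_swap (i : ℕ) (f : MvPolynomial ℕ ℤ) :
    SD.D i (rename (swap i (i + 1)) f) = -SD.D i f :=
  SD.D_eq_of_mul <| by rw [rename_swap_rename_swap]; linear_combination -SD.hD i f

theorem rename_swap_D (i : ℕ) (f : MvPolynomial ℕ ℤ) :
    rename (swap i (i + 1)) (SD.D i f) = SD.D i f := by
  have h := congrArg (rename (swap i (i + 1))) (SD.hD i f)
  simp only [map_mul, map_sub, rename_X, swap_apply_left, swap_apply_right,
    rename_swap_rename_swap] at h
  refine mul_left_cancel₀ (X_sub_X_ne_zero i) ?_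
  linear_combination -h - SD.hD i f

theorem D_D (i : ℕ) (f : MvPolynomial ℕ ℤ) : SD.D i (SD.D i f) = 0 :=
  SD.D_eq_zero_of_invariant (SD.rename_swap_D i f)

theorem D_rename_w0 {n i : ℕ} (hin : i + 1 < n) (g : MvPolynomial ℕ ℤ) :
    SD.D i (rename (w0 n) g) = -rename (w0 n) (SD.D (n - 2 - i) g) := by
  have h := congrArg (rename (w0 n)) (SD.hD (n - 2 - i) g)
  simp only [map_mul, map_sub, rename_X, w0_apply_of_lt (show n - 2 - i < n by omega),
    w0_apply_of_lt (show n - 2 - i + 1 < n by omega), ← rename_perm_mul, ← swap_mul_w0 hin] at h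
  rw [rename_perm_mul, show n - 1 - (n - 2 - i) = i + 1 by omega,
    show n - 1 - (n - 2 - i + 1) = i by omega] at h
  exact SD.D_eq_of_mul (by linear_combination h)

theorem D_eq_zero_of_isHomogeneous_zero (i : ℕ) {f : MvPolynomial ℕ ℤ}
    (hf : f.IsHomogeneous 0) : SD.D i f = 0 := by
  refine SD.D_eq_zero_of_invariant ?_
  rw [totalDegree_eq_zero_iff_eq_C.1 ((totalDegree_zero_iff_isHomogeneous _).2 hf), rename_C]

theorem D_isHomogeneous (i : ℕ) {f : MvPolynomial ℕ ℤ} {d : ℕ}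
    (hf : f.IsHomogeneous (d + 1)) : (SD.D i f).IsHomogeneous d := by
  have hX : (X i - X (i + 1) : MvPolynomial ℕ ℤ).IsHomogeneous 1 :=
    (isHomogeneous_X ℤ i).sub (isHomogeneous_X ℤ (i + 1))
  refine hX.of_mul_left (X_sub_X_ne_zero i) ?_
  rw [SD.hD, add_comm 1 d]
  exact hf.sub hf.rename_isHomogeneous

theorem degreeOf_D_add_le {i : ℕ} {f : MvPolynomial ℕ ℤ} (h : SD.D i f ≠ 0) (j : ℕ) :
    degreeOf j (SD.D i f) + degreeOf j (X i - X (i + 1) : MvPolynomial ℕ ℤ) ≤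
      max (degreeOf j f) (degreeOf (swap i (i + 1) j) f) := by
  rw [add_comm, ← degreeOf_mul_eq (X_sub_X_ne_zero i) h, SD.hD]
  refine (degreeOf_sub_le _ _ _).trans (max_le_max le_rfl ?_)
  conv_lhs => rw [← swap_apply_self i (i + 1) j]
  rw [degreeOf_rename_of_injective (swap i (i + 1)).injective]

theorem D_mem_belowStaircase {n : ℕ} (i : ℕ) {f : MvPolynomial ℕ ℤ}
    (hf : f ∈ belowStaircase n) : SD.D i f ∈ belowStaircase n := by
  intro j
  rcases eq_or_ne (SD.D i f) 0 with h | h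
  · rw [h, degreeOf_zero]
    exact Nat.zero_le _
  have key := SD.degreeOf_D_add_le h j
  have hi := hf i
  have hi' := hf (i + 1)
  rcases eq_or_ne j i with rfl | hji
  · rw [degreeOf_X_sub_X_left, swap_apply_left] at key
    omega
  rcases eq_or_ne j (i + 1) with rfl | hji'
  · rw [degreeOf_X_sub_X_right, swap_apply_right] at key
    omega
  · rw [swap_apply_of_ne_of_ne hji hji', max_self] at key
    have := hf j
    omega

theorem D_mem_span {i : ℕ} {S : Set (MvPolynomial ℕ ℤ)}
    (hS : ∀ s ∈ S, rename (swap i (i + 1)) s = s) {f : MvPolynomial ℕ ℤ}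
    (hf : f ∈ Ideal.span S) : SD.D i f ∈ Ideal.span S := by
  induction hf using Submodule.span_induction with
  | mem x hx => rw [SD.D_eq_zero_of_invariant (hS x hx)]; exact zero_mem _
  | zero => rw [SD.D_zero]; exact zero_mem _
  | add x y _ _ hx hy => rw [SD.D_add]; exact add_mem hx hy
  | smul a x hx' hx =>
    rw [smul_eq_mul, SD.D_mul]
    exact add_mem (Ideal.mul_mem_left _ _ hx') (Ideal.mul_mem_left _ _ hx)

theorem D_mem_In {n i : ℕ} (hin : i + 1 < n) {f : MvPolynomial ℕ ℤ} (hf : f ∈ In n) :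
    SD.D i f ∈ In n :=
  SD.D_mem_span (by rintro _ ⟨k, -, -, rfl⟩; exact rename_esymmN k (memSn_swap_succ hin)) hf

/-! ### The operators `∂_w` -/

theorem Dw_swap (i : ℕ) : SD.Dw (swap i (i + 1)) = SD.D i := by
  have h := SD.Dw_step 1 i (by rw [one_mul, permLength_swap, permLength_one])
  rwa [one_mul, SD.Dw_one, Function.id_comp] at h

theorem Dw_mul {u v : Perm ℕ} (hu : finSupp u) (hv : finSupp v)
    (hl : permLength (u * v) = permLength u + permLength v) :
    SD.Dw (u * v) = SD.Dw u ∘ SD.Dw v := by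
  obtain ⟨n, hv⟩ := hv
  induction hk : permLength v using Nat.strong_induction_on generalizing v with
  | _ k ih =>
    rcases eq_or_ne v 1 with rfl | hne
    · rw [mul_one, SD.Dw_one, Function.comp_id]
    obtain ⟨i, hin, hdes⟩ := exists_descent hv hne
    obtain ⟨v, rfl⟩ : ∃ v', v' * swap i (i + 1) = v := ⟨_, mul_swap_mul_self i (i + 1) v⟩
    have hv' : memSn n v := by
      simpa [mul_swap_mul_self] using hv.mul (memSn_swap_succ hin)
    have hlv := permLength_mul_swap_of_lt hv'.finSupp (i := i) (by simpa using hdes)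
    -- by subadditivity, the lengths of `u` and of the shorter `v` still add up
    have hupper := permLength_mul_le hu hv'.finSupp
    have hlower := permLength_mul_le (hu.mul hv'.finSupp) (finSupp_swap i)
    rw [permLength_swap] at hlower
    rw [← mul_assoc] at hl ⊢
    rw [SD.Dw_step (u * v) i (by omega), SD.Dw_step v i hlv, ih _ (by omega) (by omega) hv' rfl,
      Function.comp_assoc]

theorem Dw_induction {n : ℕ} {P : (MvPolynomial ℕ ℤ → MvPolynomial ℕ ℤ) → Prop} (one : P id)
    (step : ∀ F i, i + 1 < n → P F → P (F ∘ SD.D i)) {w : Perm ℕ} (hw : memSn n w) :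
    P (SD.Dw w) :=
  hw.induction (P := fun w => P (SD.Dw w)) (SD.Dw_one ▸ one) fun w i hw hin hlt hP => by
    rw [SD.Dw_step w i (permLength_mul_swap_of_lt hw.finSupp hlt)]
    exact step _ i hin hP

section

variable {SD} {n : ℕ} {w : Perm ℕ}

theorem Dw_add (hw : memSn n w) (f g : MvPolynomial ℕ ℤ) :
    SD.Dw w (f + g) = SD.Dw w f + SD.Dw w g :=
  SD.Dw_induction (P := fun F => ∀ f g, F (f + g) = F f + F g) (fun _ _ => rfl)
    (fun F i _ hF f g => by simp only [Function.comp_apply, SD.D_add, hF]) hw f g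

variable (SD) in
def dwHom (hw : memSn n w) : MvPolynomial ℕ ℤ →+ MvPolynomial ℕ ℤ :=
  AddMonoidHom.mk' (SD.Dw w) (Dw_add hw)

theorem Dw_zero (hw : memSn n w) : SD.Dw w 0 = 0 := (SD.dwHom hw).map_zero

theorem Dw_neg (hw : memSn n w) (f : MvPolynomial ℕ ℤ) : SD.Dw w (-f) = -SD.Dw w f :=
  (SD.dwHom hw).map_neg f

theorem Dw_sub (hw : memSn n w) (f g : MvPolynomial ℕ ℤ) :
    SD.Dw w (f - g) = SD.Dw w f - SD.Dw w g :=
  (SD.dwHom hw).map_sub f g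

theorem Dw_sum (hw : memSn n w) {ι : Type*} (s : Finset ι) (F : ι → MvPolynomial ℕ ℤ) :
    SD.Dw w (∑ x ∈ s, F x) = ∑ x ∈ s, SD.Dw w (F x) :=
  map_sum (SD.dwHom hw) F s

theorem Dw_mul_left_of_swapInvariant (hw : memSn n w) {c : MvPolynomial ℕ ℤ}
    (hc : SwapInvariant n c) (f : MvPolynomial ℕ ℤ) : SD.Dw w (c * f) = c * SD.Dw w f :=
  SD.Dw_induction (P := fun F => ∀ f, F (c * f) = c * F f) (fun _ => rfl)
    (fun F i hin hF f => by
      simp only [Function.comp_apply, SD.D_mul_left_of_invariant (hc i hin), hF]) hw f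

theorem Dw_smul (hw : memSn n w) (z : ℤ) (f : MvPolynomial ℕ ℤ) :
    SD.Dw w (z • f) = z • SD.Dw w f := by
  simp only [smul_eq_C_mul]
  exact Dw_mul_left_of_swapInvariant hw (fun _ _ => rename_C _ _) f

theorem Dw_mapsTo {s : Set (MvPolynomial ℕ ℤ)} (hs : ∀ i, i + 1 < n → Set.MapsTo (SD.D i) s s)
    (hw : memSn n w) : Set.MapsTo (SD.Dw w) s s :=
  SD.Dw_induction (P := fun F => Set.MapsTo F s s) (Set.mapsTo_id s)
    (fun _ i hin hF => hF.comp (hs i hin)) hw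

theorem Dw_mem_belowStaircase (hw : memSn n w) {m : ℕ} {f : MvPolynomial ℕ ℤ}
    (hf : f ∈ belowStaircase m) : SD.Dw w f ∈ belowStaircase m :=
  Dw_mapsTo (fun i _ _ hf => SD.D_mem_belowStaircase i hf) hw hf

theorem Dw_mem_In (hw : memSn n w) {f : MvPolynomial ℕ ℤ} (hf : f ∈ In n) : SD.Dw w f ∈ In n :=
  Dw_mapsTo (s := In n) (fun _ hin _ hf => SD.D_mem_In hin hf) hw hf

theorem Dw_isHomogeneous (hw : memSn n w) {f : MvPolynomial ℕ ℤ} {d : ℕ}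
    (hf : f.IsHomogeneous (d + permLength w)) : (SD.Dw w f).IsHomogeneous d := by
  refine hw.induction (P := fun w => ∀ f d, f.IsHomogeneous (d + permLength w) →
    (SD.Dw w f).IsHomogeneous d) (fun f d hf => by simpa [SD.Dw_one, permLength_one] using hf)
    (fun w i hw _ hlt ih f d hf => ?_) f d hf
  have hlen := permLength_mul_swap_of_lt hw.finSupp hlt
  rw [hlen, ← add_assoc] at hf
  rw [SD.Dw_step w i hlen, Function.comp_apply]
  exact ih _ _ (SD.D_isHomogeneous i hf)

end

/-! ### The longest element and the pairing -/

variable {n : ℕ}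

theorem Dw_cycleRange_prod_X (k : ℕ) : SD.Dw (cycleRange k) (∏ i ∈ range k, X i) = 1 := by
  induction k with
  | zero => simp [cycleRange, SD.Dw_one]
  | succ k ih =>
    have hlen := permLength_mul_swap_of_lt (memSn_cycleRange k).finSupp (i := k)
      (by simp [cycleRange_apply])
    have hinv : rename (swap k (k + 1)) (∏ i ∈ range k, X i : MvPolynomial ℕ ℤ) =
        ∏ i ∈ range k, X i := by
      rw [map_prod]
      refine prod_congr rfl fun i hi => ?_
      have := mem_range.1 hi
      rw [rename_X, swap_apply_of_ne_of_ne (by omega) (by omega)]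
    rw [cycleRange, SD.Dw_step _ k hlen, Function.comp_apply, prod_range_succ,
      SD.D_mul_left_of_invariant hinv, SD.D_X_self, mul_one, ih]

theorem Dw_w0_staircase (n : ℕ) : SD.Dw (w0 n) (staircase n) = 1 := by
  induction n with
  | zero => simp [w0_zero, SD.Dw_one, staircase]
  | succ n ih =>
    have hlen : permLength (cycleRange n * w0 n) =
        permLength (cycleRange n) + permLength (w0 n) := by
      have h := permLength_w0_mul ((memSn_w0 n).mono n.le_succ)
      have hc : w0 (n + 1) * w0 n = cycleRange n := by
        rw [← cycleRange_mul_w0, mul_assoc, w0_mul_self, mul_one]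
      rw [hc, ← cycleRange_mul_w0] at h
      omega
    rw [← cycleRange_mul_w0, SD.Dw_mul (memSn_cycleRange n).finSupp (memSn_w0 n).finSupp hlen,
      Function.comp_apply, staircase_succ,
      Dw_mul_left_of_swapInvariant (memSn_w0 n) (swapInvariant_prod_X n), ih, mul_one,
      SD.Dw_cycleRange_prod_X]

theorem Dw_w0_eq_comp_D {i : ℕ} (hin : i + 1 < n) :
    SD.Dw (w0 n) = SD.Dw (w0 n * swap i (i + 1)) ∘ SD.D i := by
  have h := SD.Dw_step (w0 n * swap i (i + 1)) i <| by
    rw [mul_swap_mul_self]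
    exact permLength_mul_swap_of_gt (memSn_w0 n).finSupp (w0_apply_succ_lt hin)
  rwa [mul_swap_mul_self] at h

theorem Dw_w0_eq_D_comp {i : ℕ} (hin : i + 1 < n) :
    SD.Dw (w0 n) = SD.D i ∘ SD.Dw (swap i (i + 1) * w0 n) := by
  have h := SD.Dw_mul (finSupp_swap i) ((finSupp_swap i).mul (memSn_w0 n).finSupp) <| by
    rw [swap_mul_self_mul, permLength_swap]
    have := permLength_swap_mul_w0 hin
    omega
  rwa [swap_mul_self_mul, SD.Dw_swap] at h

theorem Dw_w0_rename_swap {i : ℕ} (hin : i + 1 < n) (f : MvPolynomial ℕ ℤ) :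
    SD.Dw (w0 n) (rename (swap i (i + 1)) f) = -SD.Dw (w0 n) f := by
  rw [SD.Dw_w0_eq_comp_D hin, Function.comp_apply, Function.comp_apply, SD.D_rename_swap,
    Dw_neg ((memSn_w0 n).mul (memSn_swap_succ hin))]

theorem Dw_w0_rename {w : Perm ℕ} (hw : memSn n w) (f : MvPolynomial ℕ ℤ) :
    SD.Dw (w0 n) (rename w f) = (-1 : ℤ) ^ permLength w • SD.Dw (w0 n) f := by
  refine hw.induction (P := fun w => ∀ f, SD.Dw (w0 n) (rename w f) =
    (-1 : ℤ) ^ permLength w • SD.Dw (w0 n) f) (fun f => by simp [permLength_one])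
    (fun w i hw hin hlt ih f => ?_) f
  rw [rename_perm_mul, ih, SD.Dw_w0_rename_swap hin, permLength_mul_swap_of_lt hw.finSupp hlt,
    pow_succ, mul_neg_one, neg_smul, smul_neg]

theorem Dw_w0_eq_zero_of_rename_swap {a b : ℕ} (hab : a < b) (hbn : b < n)
    {f : MvPolynomial ℕ ℤ} (hf : rename (swap a b) f = f) : SD.Dw (w0 n) f = 0 := by
  -- conjugating by `swap (a + 1) b` turns `swap a b` into the simple transposition `s_a`
  have hinv : rename (swap a (a + 1)) (rename (swap (a + 1) b) f) =
      rename (swap (a + 1) b) f := by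
    rw [← rename_perm_mul, swap_mul_swap_eq_swap_mul_swap hab, rename_perm_mul, hf]
  have h0 : SD.Dw (w0 n) (rename (swap (a + 1) b) f) = 0 := by
    rw [SD.Dw_w0_eq_comp_D (i := a) (by omega), Function.comp_apply,
      SD.D_eq_zero_of_invariant hinv, Dw_zero ((memSn_w0 n).mul (memSn_swap_succ (by omega)))]
  rw [SD.Dw_w0_rename (memSn_swap (by omega) hbn)] at h0
  exact (smul_eq_zero.1 h0).resolve_left (pow_ne_zero _ (by norm_num))

def pairing (n : ℕ) (f g : MvPolynomial ℕ ℤ) : MvPolynomial ℕ ℤ := SD.Dw (w0 n) (f * g)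

theorem swapInvariant_pairing (f g : MvPolynomial ℕ ℤ) : SwapInvariant n (SD.pairing n f g) :=
  fun i hin => by rw [pairing, SD.Dw_w0_eq_D_comp hin, Function.comp_apply, SD.rename_swap_D]

theorem pairing_D_left {i : ℕ} (hin : i + 1 < n) (f g : MvPolynomial ℕ ℤ) :
    SD.pairing n (SD.D i f) g = SD.pairing n f (SD.D i g) := by
  rw [pairing, pairing, SD.Dw_w0_eq_comp_D hin, Function.comp_apply, Function.comp_apply,
    SD.D_mul, SD.D_mul, SD.D_D, SD.D_D, SD.rename_swap_D, zero_mul, zero_add, mul_zero, add_zero]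

/-! ### Schubert and dual Schubert polynomials -/

variable {w : Perm ℕ}

theorem S_isHomogeneous (hw : memSn n w) : (SD.S w).IsHomogeneous (permLength w) := by
  rw [SD.hS n w hw]
  refine Dw_isHomogeneous (hw.inv.mul (memSn_w0 n)) ?_
  rw [add_comm, permLength_inv_mul_w0 hw]
  exact staircase_isHomogeneous n

theorem S_mem_belowStaircase (hw : memSn n w) : SD.S w ∈ belowStaircase n := by
  rw [SD.hS n w hw]
  exact Dw_mem_belowStaircase (hw.inv.mul (memSn_w0 n)) (staircase_mem_belowStaircase n)

theorem S_one (n : ℕ) : SD.S 1 = 1 := by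
  rw [SD.hS n 1 (memSn_one n), inv_one, one_mul, SD.Dw_w0_staircase]

theorem S_w0 (n : ℕ) : SD.S (w0 n) = staircase n := by
  rw [SD.hS n _ (memSn_w0 n), w0_inv, w0_mul_self, SD.Dw_one, id]

theorem Dw_inv_mul_w0_eq_D_comp (hw : memSn n w) {i : ℕ} (hin : i + 1 < n)
    (hlt : w i < w (i + 1)) :
    SD.Dw (w⁻¹ * w0 n) = SD.D i ∘ SD.Dw ((w * swap i (i + 1))⁻¹ * w0 n) := by
  have hws : memSn n (w * swap i (i + 1)) := hw.mul (memSn_swap_succ hin)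
  have hu : swap i (i + 1) * ((w * swap i (i + 1))⁻¹ * w0 n) = w⁻¹ * w0 n := by
    rw [mul_inv_rev, swap_inv, ← mul_assoc, ← mul_assoc, swap_mul_self, one_mul]
  have h1 := permLength_inv_mul_w0 hw
  have h2 := permLength_inv_mul_w0 hws
  have h3 := permLength_mul_swap_of_lt hw.finSupp hlt
  have h := SD.Dw_mul (finSupp_swap i) (hws.inv.mul (memSn_w0 n)).finSupp <| by
    rw [hu, permLength_swap]
    omega
  rwa [hu, SD.Dw_swap] at h

theorem D_S (hw : memSn n w) {i : ℕ} (hin : i + 1 < n) :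
    SD.D i (SD.S w) = if w (i + 1) < w i then SD.S (w * swap i (i + 1)) else 0 := by
  split_ifs with hdes
  · have hws : memSn n (w * swap i (i + 1)) := hw.mul (memSn_swap_succ hin)
    have h := SD.Dw_inv_mul_w0_eq_D_comp hws hin (by simpa using hdes)
    rw [mul_swap_mul_self] at h
    rw [SD.hS n _ hws, h, Function.comp_apply, ← SD.hS n w hw]
  · have hlt : w i < w (i + 1) := lt_of_le_of_ne (not_lt.1 hdes) (w.injective.ne (by omega))
    rw [SD.hS n w hw, SD.Dw_inv_mul_w0_eq_D_comp hw hin hlt, Function.comp_apply, SD.D_D]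

def dual (n : ℕ) (w : Perm ℕ) : MvPolynomial ℕ ℤ :=
  rename (w0 n) (aeval (fun i => -X i) (SD.S (w * w0 n)))

theorem dual_eq (hw : memSn n w) :
    SD.dual n w = (-1 : ℤ) ^ permLength (w * w0 n) • rename (w0 n) (SD.S (w * w0 n)) := by
  rw [dual, (SD.S_isHomogeneous (hw.mul (memSn_w0 n))).aeval_neg_X, map_smul]

theorem dual_one (n : ℕ) :
    SD.dual n 1 = (-1 : ℤ) ^ permLength (w0 n) • rename (w0 n) (staircase n) := by
  rw [SD.dual_eq (memSn_one n), one_mul, SD.S_w0]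

theorem D_dual (hw : memSn n w) {i : ℕ} (hin : i + 1 < n) :
    SD.D i (SD.dual n w) = if w i < w (i + 1) then SD.dual n (w * swap i (i + 1)) else 0 := by
  have hww0 := hw.mul (memSn_w0 n)
  have hj : n - 2 - i + 1 < n := by omega
  have happly : (w * w0 n) (n - 2 - i + 1) = w i ∧ (w * w0 n) (n - 2 - i) = w (i + 1) := by
    simp only [Perm.mul_apply, w0_apply_of_lt hj, w0_apply_of_lt (show n - 2 - i < n by omega)]
    constructor <;> congr 1 <;> omega
  rw [SD.dual_eq hw, SD.D_zsmul, SD.D_rename_w0 hin, SD.D_S hww0 hj, happly.1, happly.2]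
  split_ifs with h
  · have hperm : w * w0 n * swap (n - 2 - i) (n - 2 - i + 1) = w * swap i (i + 1) * w0 n := by
      rw [mul_assoc, mul_assoc, swap_mul_w0 hin]
    have hlen := permLength_mul_swap_of_gt hww0.finSupp (i := n - 2 - i)
      (by rwa [happly.1, happly.2])
    rw [hperm] at hlen
    rw [hperm, SD.dual_eq (hw.mul (memSn_swap_succ hin)), hlen, pow_succ, mul_neg_one, neg_smul,
      smul_neg, neg_neg]
  · rw [map_zero, neg_zero, smul_zero]

/-! ### Orthogonality against `𝔖^{id}` -/

theorem pairing_dual_one_of_swapInvariant {g : MvPolynomial ℕ ℤ} (hg : SwapInvariant n g) :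
    SD.pairing n g (SD.dual n 1) = g := by
  rw [pairing, SD.dual_one, mul_smul_comm, Dw_smul (memSn_w0 n),
    Dw_mul_left_of_swapInvariant (memSn_w0 n) hg, SD.Dw_w0_rename (memSn_w0 n),
    SD.Dw_w0_staircase, mul_smul_comm, smul_smul, ← pow_add, ← two_mul, pow_mul, neg_one_sq,
    one_pow, one_smul, mul_one]

theorem Dw_w0_staircase_mul_rename_monomial {α : ℕ →₀ ℕ} (hα : ∀ j, α j ≤ n - 1 - j)
    (hα0 : α ≠ 0) (c : ℤ) :
    SD.Dw (w0 n) (staircase n * rename (w0 n) (monomial α c)) = 0 := by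
  set γ := staircaseExponent n + α.mapDomain (w0 n)
  have hγ (k : ℕ) (hk : k < n) : γ (n - 1 - k) = k + α k := by
    rw [Finsupp.add_apply, staircaseExponent_apply, Finsupp.mapDomain_equiv_apply,
      ← Perm.inv_def, w0_inv, w0_apply_of_lt (by omega)]
    congr 2 <;> omega
  obtain ⟨k₀, hk₀, hαk₀⟩ : ∃ k < n, α k ≠ 0 := by
    by_contra! h
    refine hα0 (Finsupp.ext fun k => ?_)
    by_cases hk : k < n
    · exact h k hk
    · have := hα k
      simp only [Finsupp.coe_zero, Pi.zero_apply]
      omega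
  obtain ⟨a, b, hab, hbn, heq⟩ :=
    exists_lt_add_eq_add (f := α) (fun k _ => by have := hα k; omega) hk₀ hαk₀
  rw [rename_monomial, staircase_eq_monomial, monomial_mul, one_mul]
  refine SD.Dw_w0_eq_zero_of_rename_swap (a := n - 1 - b) (b := n - 1 - a) (by omega) (by omega)
    (rename_swap_monomial ?_ c)
  rw [hγ a (by omega), hγ b hbn, heq]

theorem pairing_S_dual_one_of_ne_one (hw : memSn n w) (hne : w ≠ 1) :
    SD.pairing n (SD.S w) (SD.dual n 1) = 0 := by
  have hkill : SD.Dw (w0 n) (staircase n * rename (w0 n) (SD.S w)) = 0 := by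
    conv_lhs => rw [(SD.S w).as_sum]
    rw [map_sum, mul_sum, Dw_sum (memSn_w0 n)]
    refine sum_eq_zero fun α hα => SD.Dw_w0_staircase_mul_rename_monomial
      (fun j => (monomial_le_degreeOf j hα).trans (SD.S_mem_belowStaircase hw j)) ?_ _
    rintro rfl
    have := SD.S_isHomogeneous hw (mem_support_iff.1 hα)
    rw [map_zero] at this
    exact hne (eq_one_of_permLength_eq_zero hw this.symm)
  have hcomm : SD.S w * rename (w0 n) (staircase n) =
      rename (w0 n) (staircase n * rename (w0 n) (SD.S w)) := by
    rw [map_mul, rename_w0_rename_w0, mul_comm]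
  rw [pairing, SD.dual_one, mul_smul_comm, Dw_smul (memSn_w0 n), hcomm,
    SD.Dw_w0_rename (memSn_w0 n), hkill, smul_zero, smul_zero]

/-! ### The Schubert expansion -/

def schubertExpansion (n : ℕ) (f : MvPolynomial ℕ ℤ) : MvPolynomial ℕ ℤ :=
  ∑ u : Perm (Fin n), SD.pairing n f (SD.dual n (embedPerm n u)) * SD.S (embedPerm n u)

theorem schubertExpansion_zero : SD.schubertExpansion n 0 = 0 := by
  simp [schubertExpansion, pairing, Dw_zero (memSn_w0 n)]

theorem D_schubertExpansion {i : ℕ} (hin : i + 1 < n) (f : MvPolynomial ℕ ℤ) :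
    SD.D i (SD.schubertExpansion n f) = SD.schubertExpansion n (SD.D i f) := by
  have hτ : embedPerm n (swap ⟨i, by omega⟩ ⟨i + 1, hin⟩) = swap i (i + 1) := embedPerm_swap _ _
  rw [schubertExpansion, schubertExpansion, SD.D_sum,
    ← Equiv.sum_comp (Equiv.mulRight (swap (⟨i, by omega⟩ : Fin n) ⟨i + 1, hin⟩))]
  refine sum_congr rfl fun u _ => ?_
  have hw := memSn_embedPerm u
  rw [coe_mulRight, embedPerm_mul, hτ,
    SD.D_mul_left_of_invariant (SD.swapInvariant_pairing _ _ i hin),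
    SD.D_S (hw.mul (memSn_swap_succ hin)) hin, SD.pairing_D_left hin, SD.D_dual hw hin]
  simp only [Perm.mul_apply, swap_apply_left, swap_apply_right, mul_swap_mul_self]
  split_ifs <;> simp [pairing, Dw_zero (memSn_w0 n)]

theorem pairing_schubertExpansion_dual_one (f : MvPolynomial ℕ ℤ) :
    SD.pairing n (SD.schubertExpansion n f) (SD.dual n 1) = SD.pairing n f (SD.dual n 1) := by
  rw [schubertExpansion, pairing, sum_mul, Dw_sum (memSn_w0 n)]
  simp only [mul_assoc]
  rw [sum_eq_single (1 : Perm (Fin n)) (fun u _ hu => ?_) (by simp)]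
  · rw [Dw_mul_left_of_swapInvariant (memSn_w0 n) (SD.swapInvariant_pairing _ _), ← pairing,
      embedPerm_one, SD.S_one n, SD.pairing_dual_one_of_swapInvariant fun _ _ => map_one _,
      mul_one]
  · rw [Dw_mul_left_of_swapInvariant (memSn_w0 n) (SD.swapInvariant_pairing _ _), ← pairing,
      SD.pairing_S_dual_one_of_ne_one (memSn_embedPerm u) (by rwa [ne_eq, embedPerm_eq_one_iff]),
      mul_zero]

theorem eq_schubertExpansion_of_forall_D {f : MvPolynomial ℕ ℤ}
    (h : ∀ i, i + 1 < n → SD.D i f = SD.schubertExpansion n (SD.D i f)) :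
    f = SD.schubertExpansion n f := by
  have hE : SwapInvariant n (f - SD.schubertExpansion n f) := fun i hin =>
    SD.invariant_of_D_eq_zero <| by
      rw [SD.D_sub, SD.D_schubertExpansion hin, ← h i hin, sub_self]
  have := SD.pairing_dual_one_of_swapInvariant hE
  rw [pairing, sub_mul, Dw_sub (memSn_w0 n), ← pairing, ← pairing,
    pairing_schubertExpansion_dual_one, sub_self] at this
  exact sub_eq_zero.1 this.symm

theorem eq_schubertExpansion {f : MvPolynomial ℕ ℤ} {d : ℕ} (hf : f.IsHomogeneous d) :
    f = SD.schubertExpansion n f := by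
  induction d generalizing f with
  | zero =>
    refine SD.eq_schubertExpansion_of_forall_D fun i _ => ?_
    rw [SD.D_eq_zero_of_isHomogeneous_zero i hf, schubertExpansion_zero]
  | succ d ih => exact SD.eq_schubertExpansion_of_forall_D fun i _ => ih (SD.D_isHomogeneous i hf)

end SchubertData

/-- every homogeneous `h ∈ I_n = ⟨e_1, …, e_n⟩` decomposes as
`h = ∑_{w ∈ S_n} ⟨h, 𝔖^w⟩ 𝔖_w`, where `⟨f, g⟩ = ∂_{w₀}(fg)`, the dual Schubert polynomial
is `𝔖^w(X) = w₀ 𝔖_{w w₀}(-X)`, and each coefficient `⟨h, 𝔖^w⟩` is a symmetric polynomial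
lying in `Λ_n ∩ I_n`. -/
theorem homogeneous_In_schubert_decomposition (SD : SchubertData) (n d : ℕ)
    (h : MvPolynomial ℕ ℤ) (hhom : h.IsHomogeneous d) (hmem : h ∈ In n) :
    let Sdual : Equiv.Perm (Fin n) → MvPolynomial ℕ ℤ := fun u =>
      rename (⇑(w0 n)) ((aeval fun i : ℕ => -(X i : MvPolynomial ℕ ℤ))
        (SD.S (embedPerm n u * w0 n)))
    let pairing : Equiv.Perm (Fin n) → MvPolynomial ℕ ℤ := fun u =>
      SD.Dw (w0 n) (h * Sdual u)
    (h = ∑ u : Equiv.Perm (Fin n), pairing u * SD.S (embedPerm n u)) ∧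
    ∀ u : Equiv.Perm (Fin n),
      (∀ σ : Equiv.Perm ℕ, memSn n σ → rename (⇑σ) (pairing u) = pairing u) ∧
      pairing u ∈ In n :=
  ⟨SD.eq_schubertExpansion hhom, fun _ =>
    ⟨fun _ hσ => (SD.swapInvariant_pairing _ _).rename_eq hσ,
      SchubertData.Dw_mem_In (memSn_w0 n) (Ideal.mul_mem_right _ _ hmem)⟩⟩
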